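/- For all θ ∈ [π/2, 2π/3] and all x ∈ [-1/2, 1/2], |Δ(e^{iθ}) / Δ(x + 0.65 i)| < 1/2 and |Δ(e^{iθ}) / Δ(x + 0.75 i)| < 7/10. -/

import Mathlib

open Complex Real

/-- The modular discriminant, via its product formula `Δ(τ) = q ∏ (1 - qⁿ)²⁴`, `q = e^{2πiτ}`. -/
noncomputable def Δ (τ : ℂ) : ℂ :=
  Complex.exp (2 * π * I * τ) * ∏' n : ℕ, (1 - Complex.exp (2 * π * I * τ) ^ (n + 1)) ^ 24

/-!
With `q = e^{2πiτ}` and `r = |q| = e^{-2π Im τ} < 1`, the elementary bounds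
`-rⁿ/(1-r) ≤ log |1 - qⁿ| ≤ rⁿ` sum to `e^{-24r/(1-r)²} ≤ ∏ |1 - qⁿ|²⁴ ≤ e^{24r/(1-r)}`, so `|Δ(τ)|`
is `e^{-2π Im τ}` up to a factor close to `1`. Since `Im e^{iθ} = sin θ ≥ √3/2` on the arc, the two
ratios are at most about `e^{-2π(0.866 - 0.65) + 0.54} ≈ 0.44` and
`e^{-2π(0.866 - 0.75) + 0.35} ≈ 0.69`.
-/

lemma summable_of_le_of_le {ι : Type*} {l f u : ι → ℝ} (hl : Summable l) (hu : Summable u)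
    (hlf : ∀ i, l i ≤ f i) (hfu : ∀ i, f i ≤ u i) : Summable f := by
  have hdiff : Summable fun i ↦ f i - l i :=
    (hu.sub hl).of_nonneg_of_le (fun i ↦ sub_nonneg.2 (hlf i)) fun i ↦ by linarith [hfu i]
  simpa using hdiff.add hl

lemma tprod_mem_Icc_exp_tsum {ι : Type*} {f l u : ι → ℝ} (hf : ∀ i, 0 < f i)
    (hl : Summable l) (hu : Summable u) (hlf : ∀ i, l i ≤ Real.log (f i))
    (hfu : ∀ i, Real.log (f i) ≤ u i) :
    ∏' i, f i ∈ Set.Icc (rexp (∑' i, l i)) (rexp (∑' i, u i)) := by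
  have hlog := summable_of_le_of_le hl hu hlf hfu
  rw [← rexp_tsum_eq_tprod hf hlog, Set.mem_Icc, exp_le_exp, exp_le_exp]
  exact ⟨hl.tsum_le_tsum hlf hlog, hlog.tsum_le_tsum hfu hu⟩

lemma log_norm_one_sub_le (z : ℂ) : Real.log ‖1 - z‖ ≤ ‖z‖ := by
  rcases (norm_nonneg (1 - z)).eq_or_lt with h | h
  · simp [← h]
  · calc Real.log ‖1 - z‖ ≤ ‖1 - z‖ - 1 := log_le_sub_one_of_pos h
      _ ≤ ‖z‖ := by linarith [norm_sub_le (1 : ℂ) z, norm_one (α := ℂ)]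

lemma neg_div_one_sub_le_log_norm_one_sub {z : ℂ} (hz : ‖z‖ < 1) :
    -(‖z‖ / (1 - ‖z‖)) ≤ Real.log ‖1 - z‖ := by
  have hpos : 0 < 1 - ‖z‖ := sub_pos.2 hz
  calc -(‖z‖ / (1 - ‖z‖)) = (1 : ℝ) - (1 - ‖z‖)⁻¹ := by field_simp; ring
    _ ≤ Real.log (1 - ‖z‖) := one_sub_inv_le_log_of_pos hpos
    _ ≤ Real.log ‖1 - z‖ := log_le_log hpos (by simpa using norm_sub_norm_le (1 : ℂ) z)

lemma hasSum_pow_succ_of_lt_one {r : ℝ} (h₀ : 0 ≤ r) (h₁ : r < 1) :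
    HasSum (fun n : ℕ ↦ r ^ (n + 1)) (r / (1 - r)) := by
  simpa [pow_succ', div_eq_mul_inv] using (hasSum_geometric_of_lt_one h₀ h₁).mul_left r

lemma tprod_norm_one_sub_pow_mem_Icc {q : ℂ} (hq : ‖q‖ < 1) :
    ∏' n : ℕ, ‖1 - q ^ (n + 1)‖ ∈
      Set.Icc (rexp (-(‖q‖ / (1 - ‖q‖) ^ 2))) (rexp (‖q‖ / (1 - ‖q‖))) := by
  set r := ‖q‖
  have hpow (n : ℕ) : r ^ (n + 1) ≤ r := pow_le_of_le_one (norm_nonneg q) hq.le n.succ_ne_zero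
  have hlt (n : ℕ) : ‖q ^ (n + 1)‖ < 1 := by rw [norm_pow]; exact (hpow n).trans_lt hq
  have hpos (n : ℕ) : 0 < ‖1 - q ^ (n + 1)‖ :=
    norm_pos_iff.2 (sub_ne_zero.2 fun h ↦ (hlt n).ne (by rw [← h, norm_one]))
  have hlower (n : ℕ) : -(r ^ (n + 1) / (1 - r)) ≤ Real.log ‖1 - q ^ (n + 1)‖ :=
    calc -(r ^ (n + 1) / (1 - r)) ≤ -(‖q ^ (n + 1)‖ / (1 - ‖q ^ (n + 1)‖)) := by
          rw [norm_pow]; gcongr; exact hpow n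
      _ ≤ _ := neg_div_one_sub_le_log_norm_one_sub (hlt n)
  have hupper (n : ℕ) : Real.log ‖1 - q ^ (n + 1)‖ ≤ r ^ (n + 1) := by
    simpa only [norm_pow] using log_norm_one_sub_le (q ^ (n + 1))
  have hgeom := hasSum_pow_succ_of_lt_one (norm_nonneg q) hq
  have hl := (hgeom.div_const (1 - r)).neg
  have hmem := tprod_mem_Icc_exp_tsum hpos hl.summable hgeom.summable hlower hupper
  rwa [hl.tsum_eq, hgeom.tsum_eq, div_div, ← sq] at hmem

lemma norm_exp_two_pi_I_mul (τ : ℂ) : ‖cexp (2 * π * I * τ)‖ = rexp (-(2 * π * τ.im)) := by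
  simp [Complex.norm_exp]

lemma norm_Δ_mem_Icc {τ : ℂ} {s : ℝ} (hs : s < 1) (hτ : rexp (-(2 * π * τ.im)) ≤ s) :
    ‖Δ τ‖ ∈ Set.Icc (rexp (-(2 * π * τ.im)) * rexp (-(24 * (s / (1 - s) ^ 2))))
      (rexp (-(2 * π * τ.im)) * rexp (24 * (s / (1 - s)))) := by
  set q := cexp (2 * π * I * τ)
  have hqr : ‖q‖ = rexp (-(2 * π * τ.im)) := norm_exp_two_pi_I_mul τ
  have hqs : ‖q‖ ≤ s := hqr ▸ hτ
  have hq : ‖q‖ < 1 := hqs.trans_lt hs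
  have hΔ : ‖Δ τ‖ = ‖q‖ * (∏' n : ℕ, ‖1 - q ^ (n + 1)‖) ^ 24 := by
    rw [Δ, norm_mul, (ModularForm.multipliable_one_sub_pow hq).tprod_pow,
      norm_pow, (ModularForm.multipliable_one_sub_pow hq).norm_tprod]
  obtain ⟨hlow, hupp⟩ := tprod_norm_one_sub_pow_mem_Icc hq
  have hs0 : 0 ≤ s := (norm_nonneg q).trans hqs
  have h1s : 0 < 1 - s := sub_pos.2 hs
  have h1q : 1 - s ≤ 1 - ‖q‖ := by linarith
  rw [hΔ, ← hqr, Set.mem_Icc]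
  constructor
  · gcongr
    calc rexp (-(24 * (s / (1 - s) ^ 2))) ≤ rexp (-(‖q‖ / (1 - ‖q‖) ^ 2)) ^ 24 := by
          rw [← Real.exp_nat_mul, exp_le_exp]; push_cast
          have : ‖q‖ / (1 - ‖q‖) ^ 2 ≤ s / (1 - s) ^ 2 := by gcongr
          linarith
      _ ≤ _ := by gcongr
  · gcongr
    calc (∏' n : ℕ, ‖1 - q ^ (n + 1)‖) ^ 24 ≤ rexp (‖q‖ / (1 - ‖q‖)) ^ 24 := by
          gcongr; exact (exp_pos _).le.trans hlow
      _ ≤ rexp (24 * (s / (1 - s))) := by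
          rw [← Real.exp_nat_mul, exp_le_exp]; push_cast
          have : ‖q‖ / (1 - ‖q‖) ≤ s / (1 - s) := by gcongr
          linarith

lemma norm_Δ_div_Δ_le {τ σ : ℂ} {s t : ℝ} (hs : s < 1) (ht : t < 1)
    (hτ : rexp (-(2 * π * τ.im)) ≤ s) (hσ : rexp (-(2 * π * σ.im)) ≤ t) :
    ‖Δ τ / Δ σ‖ ≤ rexp (2 * π * (σ.im - τ.im) + 24 * (s / (1 - s)) + 24 * (t / (1 - t) ^ 2)) := by
  have hupp := (norm_Δ_mem_Icc hs hτ).2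
  have hlow := (norm_Δ_mem_Icc ht hσ).1
  rw [norm_div, div_le_iff₀ (lt_of_lt_of_le (by positivity) hlow)]
  calc ‖Δ τ‖ ≤ rexp (-(2 * π * τ.im)) * rexp (24 * (s / (1 - s))) := hupp
    _ = rexp (2 * π * (σ.im - τ.im) + 24 * (s / (1 - s)) + 24 * (t / (1 - t) ^ 2)) *
        (rexp (-(2 * π * σ.im)) * rexp (-(24 * (t / (1 - t) ^ 2)))) := by
      simp only [← Real.exp_add]; ring_nf
    _ ≤ _ := by gcongr

lemma le_exp_nat_add (n : ℕ) {t : ℝ} (ht : 0 ≤ t) :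
    2.7182818283 ^ n * (1 + t + t ^ 2 / 2) ≤ rexp (n + t) := by
  rw [Real.exp_add, ← Real.exp_one_pow]
  gcongr
  · exact exp_one_gt_d9.le
  · exact quadratic_le_exp_of_nonneg ht

lemma exp_le_of_inv_le_exp {x y c : ℝ} (hc : 0 < c) (hcy : c⁻¹ ≤ rexp y) (hxy : x ≤ -y) :
    rexp x ≤ c := by
  calc rexp x ≤ (rexp y)⁻¹ := by rw [← Real.exp_neg]; exact exp_le_exp.2 hxy
    _ ≤ c := by rw [inv_le_comm₀ (exp_pos y) hc]; exact hcy

lemma exp_lt_of_inv_lt_exp {x y c : ℝ} (hc : 0 < c) (hcy : c⁻¹ < rexp y) (hxy : x ≤ -y) :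
    rexp x < c := by
  calc rexp x ≤ (rexp y)⁻¹ := by rw [← Real.exp_neg]; exact exp_le_exp.2 hxy
    _ < c := by rw [inv_lt_comm₀ (exp_pos y) hc]; exact hcy

lemma sqrt_three_div_two_le_sin {θ : ℝ} (hθ : θ ∈ Set.Icc (π / 2) (2 * π / 3)) :
    √3 / 2 ≤ Real.sin θ := by
  rw [← Real.sin_pi_sub, ← sin_pi_div_three]
  exact sin_le_sin_of_le_of_le_pi_div_two (by linarith [pi_pos]) (by linarith [hθ.1])
    (by linarith [hθ.2])

theorem delta_ratio_bounds_general (θ : ℝ) (hθ : θ ∈ Set.Icc (π / 2) (2 * π / 3)) (x : ℝ) :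
    ‖Δ (Complex.exp (I * θ)) / Δ ((x : ℂ) + 0.65 * I)‖ < 1 / 2 ∧
    ‖Δ (Complex.exp (I * θ)) / Δ ((x : ℂ) + 0.75 * I)‖ < 7 / 10 := by
  have hπ := pi_gt_d6
  have h3 : 1.732 < √3 := lt_sqrt_of_sq_lt (by norm_num)
  have him : √3 / 2 ≤ (cexp (I * θ)).im := by
    rw [mul_comm, exp_ofReal_mul_I_im]; exact sqrt_three_div_two_le_sin hθ
  -- `5 + 0.44`, `4 + 0.08`, `4 + 0.71` lie just below `π√3`, `2π · 0.65`, `2π · 0.75`, and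
  -- `0.8`, `0.37` between `log 2`, `log (10/7)` and the resulting exponents `≈ 0.82`, `0.38`.
  have hτ : rexp (-(2 * π * (cexp (I * θ)).im)) ≤ 1 / 225 :=
    exp_le_of_inv_le_exp (by norm_num) (le_trans (by norm_num) (le_exp_nat_add 5 (t := 0.44)
      (by norm_num))) (by push_cast; nlinarith)
  have him₆₅ : ((x : ℂ) + 0.65 * I).im = 0.65 := by simp
  have him₇₅ : ((x : ℂ) + 0.75 * I).im = 0.75 := by simp
  constructor
  · refine (norm_Δ_div_Δ_le (t := 1 / 58) (by norm_num) (by norm_num) hτ ?_).trans_lt ?_ <;>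
      rw [him₆₅]
    · exact exp_le_of_inv_le_exp (by norm_num) (le_trans (by norm_num)
        (le_exp_nat_add 4 (t := 0.08) (by norm_num))) (by push_cast; nlinarith)
    · exact exp_lt_of_inv_lt_exp (by norm_num) (lt_of_lt_of_le (by norm_num)
        (le_exp_nat_add 0 (t := 0.8) (by norm_num))) (by push_cast; nlinarith)
  · refine (norm_Δ_div_Δ_le (t := 1 / 100) (by norm_num) (by norm_num) hτ ?_).trans_lt ?_ <;>
      rw [him₇₅]
    · exact exp_le_of_inv_le_exp (by norm_num) (le_trans (by norm_num)
        (le_exp_nat_add 4 (t := 0.71) (by norm_num))) (by push_cast; nlinarith)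
    · exact exp_lt_of_inv_lt_exp (by norm_num) (lt_of_lt_of_le (by norm_num)
        (le_exp_nat_add 0 (t := 0.37) (by norm_num))) (by push_cast; nlinarith)

theorem delta_ratio_bounds (θ : ℝ) (hθ : θ ∈ Set.Icc (π / 2) (2 * π / 3))
    (x : ℝ) (hx : x ∈ Set.Icc (-(1/2) : ℝ) (1/2)) :
    ‖Δ (Complex.exp (I * θ)) / Δ ((x : ℂ) + 0.65 * I)‖ < 1 / 2 ∧
    ‖Δ (Complex.exp (I * θ)) / Δ ((x : ℂ) + 0.75 * I)‖ < 7 / 10 :=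
  delta_ratio_bounds_general θ hθ x
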